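/- For any branching bisimulations R and S, the relational composition R ∘ S is again a branching bisimulation. -/
import Mathlib


set_option maxHeartbeats 1000000

namespace IPA

/-- A signature for the data part: data terms, conditions, flexible variables,
and a data algebra `D` interpreting them. -/
structure PASig : Type 1 where
  Act : Type
  ProgVar : Type
  DataTerm : Type
  Cond : Type
  D : Type
  interpD : (ProgVar → D) → DataTerm → D
  satC : (ProgVar → D) → Cond → Prop
  substD : (ProgVar → DataTerm) → DataTerm → DataTerm
  substC : (ProgVar → DataTerm) → Cond → Cond
  ctrue : Cond
  cfalse : Cond
  cnot : Cond → Cond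
  cand : Cond → Cond → Cond
  cor : Cond → Cond → Cond
  ceq : DataTerm → DataTerm → Cond
  gamma : Act → Act → Option Act

/-- `D ⊨ e = e'` : the data terms have the same interpretation (flexible
variables read as variables, hence the universal quantification). -/
def DeqD (S : PASig) (e e' : S.DataTerm) : Prop :=
  ∀ ρ : S.ProgVar → S.D, S.interpD ρ e = S.interpD ρ e'

/-- `D ⊨ φ ⇔ ψ`. -/
def CiffD (S : PASig) (φ ψ : S.Cond) : Prop :=
  ∀ ρ : S.ProgVar → S.D, S.satC ρ φ ↔ S.satC ρ ψ

/-- `D ⊨ φ`. -/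
def HoldsD (S : PASig) (φ : S.Cond) : Prop :=
  ∀ ρ : S.ProgVar → S.D, S.satC ρ φ

/-- The communication function is commutative and associative. -/
def GammaOK (S : PASig) : Prop :=
  (∀ a b, S.gamma a b = S.gamma b a) ∧
  (∀ a b c, (S.gamma a b).bind (fun x => S.gamma x c) =
    (S.gamma b c).bind (fun x => S.gamma a x))

/-- Atomic process terms: basic actions, data-parameterized actions,
assignment actions. -/
inductive Atom (S : PASig) : Type
  | basic : S.Act → Atom S
  | param : S.Act → List S.DataTerm → Atom S
  | assign : S.ProgVar → S.DataTerm → Atom S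

/-- Atomic process terms extended with the silent step τ. -/
inductive ATau (S : PASig) : Type
  | tau : ATau S
  | atom : Atom S → ATau S

/-- Data equivalence ≃ on atomic process terms extended with τ. -/
def dataEquiv (S : PASig) : ATau S → ATau S → Prop
  | ATau.tau, ATau.tau => True
  | ATau.atom (Atom.basic a), ATau.atom (Atom.basic b) => a = b
  | ATau.atom (Atom.param a es), ATau.atom (Atom.param b es') =>
      a = b ∧ List.Forall₂ (fun e e' => DeqD S e e') es es'
  | ATau.atom (Atom.assign v e), ATau.atom (Atom.assign w e') => v = w ∧ DeqD S e e'
  | _, _ => False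

/-- Evaluation maps: from flexible variables to (closed) data terms. -/
def EvalMap (S : PASig) : Type := S.ProgVar → S.DataTerm

open scoped Classical in
/-- The update `σ[e/v]` of an evaluation map. -/
noncomputable def updMap {S : PASig} (σ : EvalMap S) (v : S.ProgVar) (e : S.DataTerm) :
    EvalMap S :=
  fun w => if w = v then e else σ w

/-- Process terms of imperative ACP with empty process, silent step and
guarded linear recursion (`var`/`recc` implement recursion constants with
variables `X_0, …, X_{n-1}` for a specification `E : Fin n → PT S`). -/
inductive PT (S : PASig) : Type
  | eps : PT S
  | dead : PT S
  | act : ATau S → PT S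
  | alt : PT S → PT S → PT S
  | seq : PT S → PT S → PT S
  | par : PT S → PT S → PT S
  | leftm : PT S → PT S → PT S
  | comm : PT S → PT S → PT S
  | encap : (Atom S → Prop) → PT S → PT S
  | abstr : (Atom S → Prop) → PT S → PT S
  | gc : S.Cond → PT S → PT S
  | eval : EvalMap S → PT S → PT S
  | var : ℕ → PT S
  | recc : (n : ℕ) → (Fin n → PT S) → Fin n → PT S

/-- Substitution of process terms for the variables. -/
def substV {S : PASig} (θ : ℕ → PT S) : PT S → PT S
  | PT.eps => PT.eps
  | PT.dead => PT.dead
  | PT.act α => PT.act α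
  | PT.alt t u => PT.alt (substV θ t) (substV θ u)
  | PT.seq t u => PT.seq (substV θ t) (substV θ u)
  | PT.par t u => PT.par (substV θ t) (substV θ u)
  | PT.leftm t u => PT.leftm (substV θ t) (substV θ u)
  | PT.comm t u => PT.comm (substV θ t) (substV θ u)
  | PT.encap H t => PT.encap H (substV θ t)
  | PT.abstr I t => PT.abstr I (substV θ t)
  | PT.gc φ t => PT.gc φ (substV θ t)
  | PT.eval σ t => PT.eval σ (substV θ t)
  | PT.var k => θ k
  | PT.recc n E i => PT.recc n E i

/-- The substitution replacing variable `X_k` (k < n) by `⟨X_k | E⟩`. -/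
def recθ {S : PASig} (n : ℕ) (E : Fin n → PT S) : ℕ → PT S :=
  fun k => if h : k < n then PT.recc n E ⟨k, h⟩ else PT.var k

/-- All (free) variables of a term are among `X_0, …, X_{n-1}`. -/
inductive ClosedUnder (S : PASig) : ℕ → PT S → Prop
  | eps {n} : ClosedUnder S n PT.eps
  | dead {n} : ClosedUnder S n PT.dead
  | act {n} {α : ATau S} : ClosedUnder S n (PT.act α)
  | alt {n t u} : ClosedUnder S n t → ClosedUnder S n u → ClosedUnder S n (PT.alt t u)
  | seq {n t u} : ClosedUnder S n t → ClosedUnder S n u → ClosedUnder S n (PT.seq t u)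
  | par {n t u} : ClosedUnder S n t → ClosedUnder S n u → ClosedUnder S n (PT.par t u)
  | leftm {n t u} : ClosedUnder S n t → ClosedUnder S n u → ClosedUnder S n (PT.leftm t u)
  | comm {n t u} : ClosedUnder S n t → ClosedUnder S n u → ClosedUnder S n (PT.comm t u)
  | encap {n H t} : ClosedUnder S n t → ClosedUnder S n (PT.encap H t)
  | abstr {n I t} : ClosedUnder S n t → ClosedUnder S n (PT.abstr I t)
  | gc {n φ t} : ClosedUnder S n t → ClosedUnder S n (PT.gc φ t)
  | eval {n σ t} : ClosedUnder S n t → ClosedUnder S n (PT.eval σ t)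
  | var {n k} : k < n → ClosedUnder S n (PT.var k)
  | recc {n m} {E : Fin m → PT S} {i} :
      (∀ j, ClosedUnder S m (E j)) → ClosedUnder S n (PT.recc m E i)

/-- Closed process terms. -/
def ClosedPT (S : PASig) (t : PT S) : Prop := ClosedUnder S 0 t

/-- The successful-termination predicates `t ↓_σ` of the structural
operational semantics (the smallest relations closed under the rules). -/
inductive Terminates (S : PASig) : PT S → EvalMap S → Prop
  | eps {σ} : Terminates S PT.eps σ
  | altl {x y σ} : Terminates S x σ → Terminates S (PT.alt x y) σ
  | altr {x y σ} : Terminates S y σ → Terminates S (PT.alt x y) σ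
  | seq {x y σ} : Terminates S x σ → Terminates S y σ → Terminates S (PT.seq x y) σ
  | par {x y σ} : Terminates S x σ → Terminates S y σ → Terminates S (PT.par x y) σ
  | encap {H x σ} : Terminates S x σ → Terminates S (PT.encap H x) σ
  | abstr {I x σ} : Terminates S x σ → Terminates S (PT.abstr I x) σ
  | gc {φ x σ} : HoldsD S (S.substC σ φ) → Terminates S x σ → Terminates S (PT.gc φ x) σ
  | eval {x σ σ'} : Terminates S x σ → Terminates S (PT.eval σ x) σ'
  | recc {n} {E : Fin n → PT S} {i σ} :
      Terminates S (substV (recθ n E) (E i)) σ → Terminates S (PT.recc n E i) σ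

/-- The conditional transition relations `t →_{σ,α} t'` of the structural
operational semantics (the smallest relations closed under the rules). -/
inductive Step (S : PASig) : PT S → EvalMap S → ATau S → PT S → Prop
  | act {α σ} : Step S (PT.act α) σ α PT.eps
  | altl {x y x' σ α} : Step S x σ α x' → Step S (PT.alt x y) σ α x'
  | altr {x y y' σ α} : Step S y σ α y' → Step S (PT.alt x y) σ α y'
  | seql {x y x' σ α} : Step S x σ α x' → Step S (PT.seq x y) σ α (PT.seq x' y)
  | seqr {x y y' σ α} : Terminates S x σ → Step S y σ α y' → Step S (PT.seq x y) σ α y'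
  | parl {x y x' σ α} : Step S x σ α x' → Step S (PT.par x y) σ α (PT.par x' y)
  | parr {x y y' σ α} : Step S y σ α y' → Step S (PT.par x y) σ α (PT.par x y')
  | parcb {x y x' y' σ a b c} : S.gamma a b = some c →
      Step S x σ (ATau.atom (Atom.basic a)) x' →
      Step S y σ (ATau.atom (Atom.basic b)) y' →
      Step S (PT.par x y) σ (ATau.atom (Atom.basic c)) (PT.par x' y')
  | parcp {x y x' y' σ a b c es es'} : S.gamma a b = some c →
      Step S x σ (ATau.atom (Atom.param a es)) x' →
      Step S y σ (ATau.atom (Atom.param b es')) y' →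
      List.Forall₂ (fun e e' => DeqD S (S.substD σ e) (S.substD σ e')) es es' →
      Step S (PT.par x y) σ (ATau.atom (Atom.param c es)) (PT.par x' y')
  | leftm {x y x' σ α} : Step S x σ α x' → Step S (PT.leftm x y) σ α (PT.par x' y)
  | commb {x y x' y' σ a b c} : S.gamma a b = some c →
      Step S x σ (ATau.atom (Atom.basic a)) x' →
      Step S y σ (ATau.atom (Atom.basic b)) y' →
      Step S (PT.comm x y) σ (ATau.atom (Atom.basic c)) (PT.par x' y')
  | commp {x y x' y' σ a b c es es'} : S.gamma a b = some c →
      Step S x σ (ATau.atom (Atom.param a es)) x' →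
      Step S y σ (ATau.atom (Atom.param b es')) y' →
      List.Forall₂ (fun e e' => DeqD S (S.substD σ e) (S.substD σ e')) es es' →
      Step S (PT.comm x y) σ (ATau.atom (Atom.param c es)) (PT.par x' y')
  | encap {H x x' σ α} : Step S x σ α x' → (∀ a, α = ATau.atom a → ¬ H a) →
      Step S (PT.encap H x) σ α (PT.encap H x')
  | abstr_n {I x x' σ α} : Step S x σ α x' → (∀ a, α = ATau.atom a → ¬ I a) →
      Step S (PT.abstr I x) σ α (PT.abstr I x')
  | abstr_i {I : Atom S → Prop} {x x' σ a} : Step S x σ (ATau.atom a) x' → I a →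
      Step S (PT.abstr I x) σ ATau.tau (PT.abstr I x')
  | gc {φ x x' σ α} : HoldsD S (S.substC σ φ) → Step S x σ α x' →
      Step S (PT.gc φ x) σ α x'
  | eval_tau {x x' σ σ'} : Step S x σ ATau.tau x' →
      Step S (PT.eval σ x) σ' ATau.tau (PT.eval σ x')
  | eval_basic {x x' σ σ' a} : Step S x σ (ATau.atom (Atom.basic a)) x' →
      Step S (PT.eval σ x) σ' (ATau.atom (Atom.basic a)) (PT.eval σ x')
  | eval_param {x x' σ σ' a es} : Step S x σ (ATau.atom (Atom.param a es)) x' →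
      Step S (PT.eval σ x) σ' (ATau.atom (Atom.param a (es.map (S.substD σ))))
        (PT.eval σ x')
  | eval_assign {x x' σ σ' v e} : Step S x σ (ATau.atom (Atom.assign v e)) x' →
      Step S (PT.eval σ x) σ' (ATau.atom (Atom.assign v (S.substD σ e)))
        (PT.eval (updMap σ v (S.substD σ e)) x')
  | recc {n} {E : Fin n → PT S} {i σ α x'} :
      Step S (substV (recθ n E) (E i)) σ α x' → Step S (PT.recc n E i) σ α x'

/-- The silent-step closure `t ⇒_σ t'`. -/
inductive Silent (S : PASig) (σ : EvalMap S) : PT S → PT S → Prop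
  | refl (t) : Silent S σ t t
  | step {t t' t''} : Silent S σ t t' → Step S t' σ ATau.tau t'' → Silent S σ t t''

/-- `t (→_{σ,α}) t'` : a transition or, for `α = τ`, staying put. -/
def OStep (S : PASig) (t : PT S) (σ : EvalMap S) (α : ATau S) (t' : PT S) : Prop :=
  Step S t σ α t' ∨ (α = ATau.tau ∧ t = t')

/-- Branching bisimulation: the four transfer conditions. -/
def IsBB (S : PASig) (R : PT S → PT S → Prop) : Prop :=
  ∀ t1 t2, R t1 t2 →
    (∀ σ α t1', Step S t1 σ α t1' →
      ∃ α' t2s t2', dataEquiv S α α' ∧ Silent S σ t2 t2s ∧ OStep S t2s σ α' t2' ∧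
        R t1 t2s ∧ R t1' t2') ∧
    (∀ σ α t2', Step S t2 σ α t2' →
      ∃ α' t1s t1', dataEquiv S α α' ∧ Silent S σ t1 t1s ∧ OStep S t1s σ α' t1' ∧
        R t1s t2 ∧ R t1' t2') ∧
    (∀ σ, Terminates S t1 σ →
      ∃ t2s, Silent S σ t2 t2s ∧ Terminates S t2s σ ∧ R t1 t2s) ∧
    (∀ σ, Terminates S t2 σ →
      ∃ t1s, Silent S σ t1 t1s ∧ Terminates S t1s σ ∧ R t1s t2)

/-- The root condition for a pair `(t1, t2)` in a relation `R`. -/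
def RootCond (S : PASig) (R : PT S → PT S → Prop) (t1 t2 : PT S) : Prop :=
  (∀ σ α t1', Step S t1 σ α t1' →
    ∃ α' t2', dataEquiv S α α' ∧ Step S t2 σ α' t2' ∧ R t1' t2') ∧
  (∀ σ α t2', Step S t2 σ α t2' →
    ∃ α' t1', dataEquiv S α α' ∧ Step S t1 σ α' t1' ∧ R t1' t2') ∧
  (∀ σ, Terminates S t1 σ ↔ Terminates S t2 σ)

/-- Rooted branching bisimulation equivalence `t1 ⇔_rb t2`. -/
def RBB (S : PASig) (t1 t2 : PT S) : Prop :=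
  ∃ R, IsBB S R ∧ R t1 t2 ∧ RootCond S R t1 t2

/-- Linear process terms. -/
inductive LinearPT (S : PASig) : PT S → Prop
  | dead : LinearPT S PT.dead
  | gceps {φ} : LinearPT S (PT.gc φ PT.eps)
  | gcact {φ} {α : ATau S} {k} : LinearPT S (PT.gc φ (PT.seq (PT.act α) (PT.var k)))
  | alt {t u} : LinearPT S t → LinearPT S u → LinearPT S (PT.alt t u)

/-- `X_k` has an unguarded occurrence in the linear term. -/
inductive UnguardedVar (S : PASig) : PT S → ℕ → Prop
  | gctau {φ k} : UnguardedVar S (PT.gc φ (PT.seq (PT.act ATau.tau) (PT.var k))) k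
  | altl {t u k} : UnguardedVar S t k → UnguardedVar S (PT.alt t u) k
  | altr {t u k} : UnguardedVar S u k → UnguardedVar S (PT.alt t u) k

/-- Guarded linear recursive specification. -/
def GLRS (S : PASig) (n : ℕ) (E : Fin n → PT S) : Prop :=
  (∀ i, LinearPT S (E i)) ∧ (∀ i, ClosedUnder S n (E i)) ∧
    ¬ ∃ f : ℕ → Fin n, ∀ k, UnguardedVar S (E (f k)) ↑(f (k + 1))

/-- `X_k` occurs in the term. -/
inductive OccursVar (S : PASig) (k : ℕ) : PT S → Prop
  | var : OccursVar S k (PT.var k)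
  | altl {t u} : OccursVar S k t → OccursVar S k (PT.alt t u)
  | altr {t u} : OccursVar S k u → OccursVar S k (PT.alt t u)
  | seql {t u} : OccursVar S k t → OccursVar S k (PT.seq t u)
  | seqr {t u} : OccursVar S k u → OccursVar S k (PT.seq t u)
  | parl {t u} : OccursVar S k t → OccursVar S k (PT.par t u)
  | parr {t u} : OccursVar S k u → OccursVar S k (PT.par t u)
  | leftml {t u} : OccursVar S k t → OccursVar S k (PT.leftm t u)
  | leftmr {t u} : OccursVar S k u → OccursVar S k (PT.leftm t u)
  | comml {t u} : OccursVar S k t → OccursVar S k (PT.comm t u)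
  | commr {t u} : OccursVar S k u → OccursVar S k (PT.comm t u)
  | encap {H t} : OccursVar S k t → OccursVar S k (PT.encap H t)
  | abstr {I t} : OccursVar S k t → OccursVar S k (PT.abstr I t)
  | gc {φ t} : OccursVar S k t → OccursVar S k (PT.gc φ t)
  | eval {σ t} : OccursVar S k t → OccursVar S k (PT.eval σ t)

/-- Reachability `X ⇒_E Y` between the variables of a specification:
the reflexive transitive closure of direct reachability. -/
def Reach (S : PASig) (n : ℕ) (E : Fin n → PT S) : Fin n → Fin n → Prop :=
  Relation.ReflTransGen (fun i j => OccursVar S (↑j) (E i))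

/-- `s` is a summand of the linear term `t`. -/
inductive SummandOf (S : PASig) : PT S → PT S → Prop
  | gceps {φ} : SummandOf S (PT.gc φ PT.eps) (PT.gc φ PT.eps)
  | gcact {φ} {α : ATau S} {k} :
      SummandOf S (PT.gc φ (PT.seq (PT.act α) (PT.var k)))
        (PT.gc φ (PT.seq (PT.act α) (PT.var k)))
  | altl {s t u} : SummandOf S s t → SummandOf S s (PT.alt t u)
  | altr {s t u} : SummandOf S s u → SummandOf S s (PT.alt t u)

/-- `α ∈ I ∪ {τ}`. -/
def InIorTau (S : PASig) (I : Atom S → Prop) : ATau S → Prop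
  | ATau.tau => True
  | ATau.atom a => I a

/-- `C` is a cluster for `I` in `E`. -/
def IsCluster (S : PASig) (I : Atom S → Prop) (n : ℕ) (E : Fin n → PT S)
    (C : Set (Fin n)) : Prop :=
  ∀ i ∈ C, ∀ (φ : S.Cond) (α : ATau S) (k : ℕ),
    SummandOf S (PT.gc φ (PT.seq (PT.act α) (PT.var k))) (E i) →
    ∀ h : k < n, (⟨k, h⟩ : Fin n) ∈ C → φ = S.ctrue ∧ InIorTau S I α

/-- `t` belongs to the exit set of `C` for `I` in `E`. -/
def IsExit (S : PASig) (I : Atom S → Prop) (n : ℕ) (E : Fin n → PT S)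
    (C : Set (Fin n)) (t : PT S) : Prop :=
  (∃ i ∈ C, SummandOf S t (E i)) ∧
    ((∃ (φ : S.Cond) (α : ATau S) (k : ℕ),
        t = PT.gc φ (PT.seq (PT.act α) (PT.var k)) ∧
          (¬ InIorTau S I α ∨ ∀ h : k < n, (⟨k, h⟩ : Fin n) ∉ C)) ∨
      ∃ φ, t = PT.gc φ PT.eps)

/-- `C` is a conservative cluster for `I` in `E`. -/
def IsConsCluster (S : PASig) (I : Atom S → Prop) (n : ℕ) (E : Fin n → PT S)
    (C : Set (Fin n)) : Prop :=
  IsCluster S I n E C ∧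
    ∀ i ∈ C, ∀ t, IsExit S I n E C t → ∃ j, Reach S n E i j ∧ SummandOf S t (E j)

/-- Right-nested alternative composition (δ for the empty list). -/
def altList (S : PASig) : List (PT S) → PT S
  | [] => PT.dead
  | [t] => t
  | t :: u :: r => PT.alt t (altList S (u :: r))

/-- Conjunction of a list of conditions. -/
def candList (S : PASig) : List S.Cond → S.Cond
  | [] => S.ctrue
  | [φ] => φ
  | φ :: ψ :: r => S.cand φ (candList S (ψ :: r))

/-- `g ∈ AProcTerm ∪ {τ, δ}` (as a process term). -/
def IsAtomTD (S : PASig) (g : PT S) : Prop := (∃ α : ATau S, g = PT.act α) ∨ g = PT.dead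

/-- `γ(a, b)` as a process term (δ if undefined). -/
def gammaPT (S : PASig) (a b : S.Act) : PT S :=
  match S.gamma a b with
  | some c => PT.act (ATau.atom (Atom.basic c))
  | none => PT.dead

/-- Derivability in conditional equational logic from the axioms of the
imperative process algebra.  `rf` enables RDP/RSP (guarded linear recursion),
`cf` enables CFAR, and `bf` selects the branching axiom: BED if `true`,
the alternative `α·(φ :→ τ·x) = α·(φ :→ x)` if `false`. -/
inductive Deriv (S : PASig) (rf cf bf : Bool) : PT S → PT S → Prop
  | refl {t} : Deriv S rf cf bf t t
  | symm {t u} : Deriv S rf cf bf t u → Deriv S rf cf bf u t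
  | trans {t u v} : Deriv S rf cf bf t u → Deriv S rf cf bf u v → Deriv S rf cf bf t v
  | cAlt {t t' u u'} : Deriv S rf cf bf t t' → Deriv S rf cf bf u u' →
      Deriv S rf cf bf (PT.alt t u) (PT.alt t' u')
  | cSeq {t t' u u'} : Deriv S rf cf bf t t' → Deriv S rf cf bf u u' →
      Deriv S rf cf bf (PT.seq t u) (PT.seq t' u')
  | cPar {t t' u u'} : Deriv S rf cf bf t t' → Deriv S rf cf bf u u' →
      Deriv S rf cf bf (PT.par t u) (PT.par t' u')
  | cLeftm {t t' u u'} : Deriv S rf cf bf t t' → Deriv S rf cf bf u u' →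
      Deriv S rf cf bf (PT.leftm t u) (PT.leftm t' u')
  | cComm {t t' u u'} : Deriv S rf cf bf t t' → Deriv S rf cf bf u u' →
      Deriv S rf cf bf (PT.comm t u) (PT.comm t' u')
  | cEncap {H t t'} : Deriv S rf cf bf t t' →
      Deriv S rf cf bf (PT.encap H t) (PT.encap H t')
  | cAbstr {I t t'} : Deriv S rf cf bf t t' →
      Deriv S rf cf bf (PT.abstr I t) (PT.abstr I t')
  | cGc {φ t t'} : Deriv S rf cf bf t t' → Deriv S rf cf bf (PT.gc φ t) (PT.gc φ t')
  | cEval {σ t t'} : Deriv S rf cf bf t t' →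
      Deriv S rf cf bf (PT.eval σ t) (PT.eval σ t')
  | a1 {t u} : Deriv S rf cf bf (PT.alt t u) (PT.alt u t)
  | a2 {t u v} : Deriv S rf cf bf (PT.alt (PT.alt t u) v) (PT.alt t (PT.alt u v))
  | a3 {t} : Deriv S rf cf bf (PT.alt t t) t
  | a4 {t u v} : Deriv S rf cf bf (PT.seq (PT.alt t u) v)
      (PT.alt (PT.seq t v) (PT.seq u v))
  | a5 {t u v} : Deriv S rf cf bf (PT.seq (PT.seq t u) v) (PT.seq t (PT.seq u v))
  | a6 {t} : Deriv S rf cf bf (PT.alt t PT.dead) t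
  | a7 {t} : Deriv S rf cf bf (PT.seq PT.dead t) PT.dead
  | a8 {t} : Deriv S rf cf bf (PT.seq t PT.eps) t
  | a9 {t} : Deriv S rf cf bf (PT.seq PT.eps t) t
  | cm1e {t u} : Deriv S rf cf bf (PT.par t u)
      (PT.alt (PT.alt (PT.alt (PT.leftm t u) (PT.leftm u t)) (PT.comm t u))
        (PT.seq (PT.encap (fun _ => True) t) (PT.encap (fun _ => True) u)))
  | cm2e {t} : Deriv S rf cf bf (PT.leftm PT.eps t) PT.dead
  | cm3 {g t u} : IsAtomTD S g →
      Deriv S rf cf bf (PT.leftm (PT.seq g t) u) (PT.seq g (PT.par t u))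
  | cm4 {t u v} : Deriv S rf cf bf (PT.leftm (PT.alt t u) v)
      (PT.alt (PT.leftm t v) (PT.leftm u v))
  | cm5e {t} : Deriv S rf cf bf (PT.comm PT.eps t) PT.dead
  | cm6e {t} : Deriv S rf cf bf (PT.comm t PT.eps) PT.dead
  | cm7b {a b t u} : Deriv S rf cf bf
      (PT.comm (PT.seq (PT.act (ATau.atom (Atom.basic a))) t)
        (PT.seq (PT.act (ATau.atom (Atom.basic b))) u))
      (PT.seq (gammaPT S a b) (PT.par t u))
  | cm7tl {g t u} : IsAtomTD S g → Deriv S rf cf bf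
      (PT.comm (PT.seq (PT.act ATau.tau) t) (PT.seq g u))
      (PT.seq PT.dead (PT.par t u))
  | cm7tr {g t u} : IsAtomTD S g → Deriv S rf cf bf
      (PT.comm (PT.seq g t) (PT.seq (PT.act ATau.tau) u))
      (PT.seq PT.dead (PT.par t u))
  | cm7dl {g t u} : IsAtomTD S g → Deriv S rf cf bf
      (PT.comm (PT.seq PT.dead t) (PT.seq g u)) (PT.seq PT.dead (PT.par t u))
  | cm7dr {g t u} : IsAtomTD S g → Deriv S rf cf bf
      (PT.comm (PT.seq g t) (PT.seq PT.dead u)) (PT.seq PT.dead (PT.par t u))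
  | cm8 {t u v} : Deriv S rf cf bf (PT.comm (PT.alt t u) v)
      (PT.alt (PT.comm t v) (PT.comm u v))
  | cm9 {t u v} : Deriv S rf cf bf (PT.comm t (PT.alt u v))
      (PT.alt (PT.comm t u) (PT.comm t v))
  | d0 {H} : Deriv S rf cf bf (PT.encap H PT.eps) PT.eps
  | d1 {H : Atom S → Prop} {g} : IsAtomTD S g →
      (∀ a, g = PT.act (ATau.atom a) → ¬ H a) → Deriv S rf cf bf (PT.encap H g) g
  | d2 {H : Atom S → Prop} {a} : H a →
      Deriv S rf cf bf (PT.encap H (PT.act (ATau.atom a))) PT.dead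
  | d3 {H t u} : Deriv S rf cf bf (PT.encap H (PT.alt t u))
      (PT.alt (PT.encap H t) (PT.encap H u))
  | d4 {H t u} : Deriv S rf cf bf (PT.encap H (PT.seq t u))
      (PT.seq (PT.encap H t) (PT.encap H u))
  | t0 {I} : Deriv S rf cf bf (PT.abstr I PT.eps) PT.eps
  | t1 {I : Atom S → Prop} {g} : IsAtomTD S g →
      (∀ a, g = PT.act (ATau.atom a) → ¬ I a) → Deriv S rf cf bf (PT.abstr I g) g
  | t2 {I : Atom S → Prop} {a} : I a →
      Deriv S rf cf bf (PT.abstr I (PT.act (ATau.atom a))) (PT.act ATau.tau)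
  | t3 {I t u} : Deriv S rf cf bf (PT.abstr I (PT.alt t u))
      (PT.alt (PT.abstr I t) (PT.abstr I u))
  | t4 {I t u} : Deriv S rf cf bf (PT.abstr I (PT.seq t u))
      (PT.seq (PT.abstr I t) (PT.abstr I u))
  | be {g t u} : IsAtomTD S g → Deriv S rf cf bf
      (PT.seq g (PT.alt (PT.seq (PT.act ATau.tau) (PT.alt t u)) t))
      (PT.seq g (PT.alt t u))
  | imp1 {α α'} : dataEquiv S α α' → Deriv S rf cf bf (PT.act α) (PT.act α')
  | imp2 {φ ψ t} : CiffD S φ ψ → Deriv S rf cf bf (PT.gc φ t) (PT.gc ψ t)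
  | gc1 {t} : Deriv S rf cf bf (PT.gc S.ctrue t) t
  | gc2 {t} : Deriv S rf cf bf (PT.gc S.cfalse t) PT.dead
  | gc3 {φ} : Deriv S rf cf bf (PT.gc φ PT.dead) PT.dead
  | gc4 {φ t u} : Deriv S rf cf bf (PT.gc φ (PT.alt t u))
      (PT.alt (PT.gc φ t) (PT.gc φ u))
  | gc5 {φ t u} : Deriv S rf cf bf (PT.gc φ (PT.seq t u)) (PT.seq (PT.gc φ t) u)
  | gc6 {φ ψ t} : Deriv S rf cf bf (PT.gc φ (PT.gc ψ t)) (PT.gc (S.cand φ ψ) t)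
  | gc7 {φ ψ t} : Deriv S rf cf bf (PT.gc (S.cor φ ψ) t)
      (PT.alt (PT.gc φ t) (PT.gc ψ t))
  | gc8 {φ t u} : Deriv S rf cf bf (PT.leftm (PT.gc φ t) u) (PT.gc φ (PT.leftm t u))
  | gc9 {φ t u} : Deriv S rf cf bf (PT.comm (PT.gc φ t) u) (PT.gc φ (PT.comm t u))
  | gc10 {φ t u} : Deriv S rf cf bf (PT.comm t (PT.gc φ u)) (PT.gc φ (PT.comm t u))
  | gc11 {H φ t} : Deriv S rf cf bf (PT.encap H (PT.gc φ t)) (PT.gc φ (PT.encap H t))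
  | gc12 {I φ t} : Deriv S rf cf bf (PT.abstr I (PT.gc φ t)) (PT.gc φ (PT.abstr I t))
  | v0 {σ} : Deriv S rf cf bf (PT.eval σ PT.eps) PT.eps
  | v1 {σ t} : Deriv S rf cf bf (PT.eval σ (PT.seq (PT.act ATau.tau) t))
      (PT.seq (PT.act ATau.tau) (PT.eval σ t))
  | v2 {σ a t} : Deriv S rf cf bf
      (PT.eval σ (PT.seq (PT.act (ATau.atom (Atom.basic a))) t))
      (PT.seq (PT.act (ATau.atom (Atom.basic a))) (PT.eval σ t))
  | v3 {σ a es t} : Deriv S rf cf bf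
      (PT.eval σ (PT.seq (PT.act (ATau.atom (Atom.param a es))) t))
      (PT.seq (PT.act (ATau.atom (Atom.param a (es.map (S.substD σ))))) (PT.eval σ t))
  | v4 {σ v e t} : Deriv S rf cf bf
      (PT.eval σ (PT.seq (PT.act (ATau.atom (Atom.assign v e))) t))
      (PT.seq (PT.act (ATau.atom (Atom.assign v (S.substD σ e))))
        (PT.eval (updMap σ v (S.substD σ e)) t))
  | v5 {σ t u} : Deriv S rf cf bf (PT.eval σ (PT.alt t u))
      (PT.alt (PT.eval σ t) (PT.eval σ u))
  | v6 {σ φ t} : Deriv S rf cf bf (PT.eval σ (PT.gc φ t))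
      (PT.gc (S.substC σ φ) (PT.eval σ t))
  | cm7da {a b c es es' t u} : S.gamma a b = some c → es.length = es'.length →
      Deriv S rf cf bf
        (PT.comm (PT.seq (PT.act (ATau.atom (Atom.param a es))) t)
          (PT.seq (PT.act (ATau.atom (Atom.param b es'))) u))
        (PT.gc (candList S (List.zipWith S.ceq es es'))
          (PT.seq (PT.act (ATau.atom (Atom.param c es))) (PT.par t u)))
  | cm7db {a b es es' t u} : (S.gamma a b = none ∨ es.length ≠ es'.length) →
      Deriv S rf cf bf
        (PT.comm (PT.seq (PT.act (ATau.atom (Atom.param a es))) t)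
          (PT.seq (PT.act (ATau.atom (Atom.param b es'))) u)) PT.dead
  | cm7dc {a es g t u} : IsAtomTD S g →
      (∀ b es', g ≠ PT.act (ATau.atom (Atom.param b es'))) →
      Deriv S rf cf bf
        (PT.comm (PT.seq (PT.act (ATau.atom (Atom.param a es))) t) (PT.seq g u))
        PT.dead
  | cm7dd {a es g t u} : IsAtomTD S g →
      (∀ b es', g ≠ PT.act (ATau.atom (Atom.param b es'))) →
      Deriv S rf cf bf
        (PT.comm (PT.seq g t) (PT.seq (PT.act (ATau.atom (Atom.param a es))) u))
        PT.dead
  | cm7de {v e g t u} : IsAtomTD S g →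
      Deriv S rf cf bf
        (PT.comm (PT.seq (PT.act (ATau.atom (Atom.assign v e))) t) (PT.seq g u))
        PT.dead
  | cm7df {v e g t u} : IsAtomTD S g →
      Deriv S rf cf bf
        (PT.comm (PT.seq g t) (PT.seq (PT.act (ATau.atom (Atom.assign v e))) u))
        PT.dead
  | bed {g φ t u} : bf = true → IsAtomTD S g → Deriv S rf cf bf
      (PT.seq g (PT.alt (PT.gc φ (PT.seq (PT.act ATau.tau) (PT.alt t u))) (PT.gc φ t)))
      (PT.seq g (PT.gc φ (PT.alt t u)))
  | bedalt {g φ t} : bf = false → IsAtomTD S g → Deriv S rf cf bf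
      (PT.seq g (PT.gc φ (PT.seq (PT.act ATau.tau) t))) (PT.seq g (PT.gc φ t))
  | rdp {n} {E : Fin n → PT S} {i} : rf = true → GLRS S n E →
      Deriv S rf cf bf (PT.recc n E i) (substV (recθ n E) (E i))
  | rsp {n} {E θ : Fin n → PT S} {i} : rf = true → GLRS S n E →
      (∀ j, Deriv S rf cf bf (θ j)
        (substV (fun k => if h : k < n then θ ⟨k, h⟩ else PT.var k) (E j))) →
      Deriv S rf cf bf (θ i) (PT.recc n E i)
  | cfar {n} {E : Fin n → PT S} {I : Atom S → Prop} {C : Set (Fin n)} {i}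
      {ts : List (PT S)} : cf = true → GLRS S n E → IsConsCluster S I n E C →
      i ∈ C → (∀ t, IsExit S I n E C t ↔ t ∈ ts) →
      Deriv S rf cf bf (PT.seq (PT.act ATau.tau) (PT.abstr I (PT.recc n E i)))
        (PT.seq (PT.act ATau.tau)
          (PT.abstr I (altList S (ts.map (substV (recθ n E))))))

/-- No abstraction operator occurs in the term. -/
inductive AbstractionFree (S : PASig) : PT S → Prop
  | eps : AbstractionFree S PT.eps
  | dead : AbstractionFree S PT.dead
  | act {α} : AbstractionFree S (PT.act α)
  | var {k} : AbstractionFree S (PT.var k)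
  | alt {t u} : AbstractionFree S t → AbstractionFree S u →
      AbstractionFree S (PT.alt t u)
  | seq {t u} : AbstractionFree S t → AbstractionFree S u →
      AbstractionFree S (PT.seq t u)
  | par {t u} : AbstractionFree S t → AbstractionFree S u →
      AbstractionFree S (PT.par t u)
  | leftm {t u} : AbstractionFree S t → AbstractionFree S u →
      AbstractionFree S (PT.leftm t u)
  | comm {t u} : AbstractionFree S t → AbstractionFree S u →
      AbstractionFree S (PT.comm t u)
  | encap {H t} : AbstractionFree S t → AbstractionFree S (PT.encap H t)
  | gc {φ t} : AbstractionFree S t → AbstractionFree S (PT.gc φ t)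
  | eval {σ t} : AbstractionFree S t → AbstractionFree S (PT.eval σ t)
  | recc {n} {E : Fin n → PT S} {i} : (∀ j, AbstractionFree S (E j)) →
      AbstractionFree S (PT.recc n E i)

/-- Every condition occurring in the term is D-equivalent to True or to
False. -/
inductive BoolCond (S : PASig) : PT S → Prop
  | eps : BoolCond S PT.eps
  | dead : BoolCond S PT.dead
  | act {α} : BoolCond S (PT.act α)
  | var {k} : BoolCond S (PT.var k)
  | alt {t u} : BoolCond S t → BoolCond S u → BoolCond S (PT.alt t u)
  | seq {t u} : BoolCond S t → BoolCond S u → BoolCond S (PT.seq t u)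
  | par {t u} : BoolCond S t → BoolCond S u → BoolCond S (PT.par t u)
  | leftm {t u} : BoolCond S t → BoolCond S u → BoolCond S (PT.leftm t u)
  | comm {t u} : BoolCond S t → BoolCond S u → BoolCond S (PT.comm t u)
  | encap {H t} : BoolCond S t → BoolCond S (PT.encap H t)
  | abstr {I t} : BoolCond S t → BoolCond S (PT.abstr I t)
  | gc {φ t} : (CiffD S φ S.ctrue ∨ CiffD S φ S.cfalse) → BoolCond S t →
      BoolCond S (PT.gc φ t)
  | eval {σ t} : BoolCond S t → BoolCond S (PT.eval σ t)
  | recc {n} {E : Fin n → PT S} {i} : (∀ j, BoolCond S (E j)) →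
      BoolCond S (PT.recc n E i)

lemma deqD_trans {S : PASig} {a b c : S.DataTerm} (h1 : DeqD S a b) (h2 : DeqD S b c) :
    DeqD S a c := fun ρ => (h1 ρ).trans (h2 ρ)

lemma forall₂_deq_trans {S : PASig} {es es' es'' : List S.DataTerm}
    (h1 : List.Forall₂ (fun e e' => DeqD S e e') es es')
    (h2 : List.Forall₂ (fun e e' => DeqD S e e') es' es'') :
    List.Forall₂ (fun e e' => DeqD S e e') es es'' := by
  induction h1 generalizing es'' with
  | nil => cases h2; exact .nil
  | cons h _ ih => cases h2 with
    | cons h' t' => exact .cons (deqD_trans h h') (ih t')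

lemma dataEquiv_trans {S : PASig} {a b c : ATau S}
    (hab : dataEquiv S a b) (hbc : dataEquiv S b c) : dataEquiv S a c := by
  cases a with
  | tau => cases b with
    | tau => exact hbc
    | atom x => cases x <;> exact absurd hab (by simp [dataEquiv])
  | atom x => cases b with
    | tau => cases x <;> exact absurd hab (by simp [dataEquiv])
    | atom y =>
      cases c with
      | tau => cases y <;> exact absurd hbc (by simp [dataEquiv])
      | atom z =>
        cases x <;> cases y <;> cases z <;>
          simp only [dataEquiv] at hab hbc ⊢ <;>
          first
          | exact hab.elim
          | exact hbc.elim
          | exact hab.trans hbc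
          | exact ⟨hab.1.trans hbc.1, forall₂_deq_trans hab.2 hbc.2⟩
          | exact ⟨hab.1.trans hbc.1, deqD_trans hab.2 hbc.2⟩

lemma eq_tau_of_dataEquiv_tau_left {S : PASig} {α : ATau S}
    (h : dataEquiv S ATau.tau α) : α = ATau.tau := by
  cases α with
  | tau => rfl
  | atom a => cases a <;> exact absurd h (by simp [dataEquiv])

lemma eq_tau_of_dataEquiv_tau_right {S : PASig} {α : ATau S}
    (h : dataEquiv S α ATau.tau) : α = ATau.tau := by
  cases α with
  | tau => rfl
  | atom a => cases a <;> exact absurd h (by simp [dataEquiv])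

lemma silent_trans {S : PASig} {σ : EvalMap S} {t u v : PT S}
    (h1 : Silent S σ t u) (h2 : Silent S σ u v) : Silent S σ t v := by
  induction h2 with
  | refl => exact h1
  | step _ s ih => exact Silent.step ih s

/-- Transfer a silent run of the left component over a bisimulation. -/
lemma silent_transfer_left {S : PASig} {R : PT S → PT S → Prop} (hR : IsBB S R)
    {σ : EvalMap S} {u t2 u' : PT S} (hru : R u t2) (hs : Silent S σ u u') :
    ∃ t2s, Silent S σ t2 t2s ∧ R u' t2s := by
  induction hs with
  | refl => exact ⟨t2, Silent.refl t2, hru⟩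
  | step _ s ih =>
    obtain ⟨t2s, hsil, hrel⟩ := ih
    obtain ⟨α', t2m, t2', hde, hsil2, host, _, hrel'⟩ := (hR _ _ hrel).1 _ _ _ s
    have hα : α' = ATau.tau := eq_tau_of_dataEquiv_tau_left hde
    subst hα
    rcases host with hstep | ⟨_, heq⟩
    · exact ⟨t2', silent_trans hsil (Silent.step hsil2 hstep), hrel'⟩
    · subst heq; exact ⟨t2m, silent_trans hsil hsil2, hrel'⟩

/-- Transfer a silent run of the right component over a bisimulation. -/
lemma silent_transfer_right {S : PASig} {R : PT S → PT S → Prop} (hR : IsBB S R)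
    {σ : EvalMap S} {t1 u u' : PT S} (hru : R t1 u) (hs : Silent S σ u u') :
    ∃ t1s, Silent S σ t1 t1s ∧ R t1s u' := by
  induction hs with
  | refl => exact ⟨t1, Silent.refl t1, hru⟩
  | step _ s ih =>
    obtain ⟨t1s, hsil, hrel⟩ := ih
    obtain ⟨α', t1m, t1', hde, hsil2, host, _, hrel'⟩ := (hR _ _ hrel).2.1 _ _ _ s
    have hα : α' = ATau.tau := eq_tau_of_dataEquiv_tau_left hde
    subst hα
    rcases host with hstep | ⟨_, heq⟩
    · exact ⟨t1', silent_trans hsil (Silent.step hsil2 hstep), hrel'⟩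
    · subst heq; exact ⟨t1m, silent_trans hsil hsil2, hrel'⟩

/-- the composition of branching bisimulations is a branching
bisimulation. -/
theorem statement5 (S : PASig) (R Q : PT S → PT S → Prop)
    (hR : IsBB S R) (hQ : IsBB S Q) : IsBB S (Relation.Comp R Q) := by
  intro t1 t2 ⟨u, hru, hqu⟩
  refine ⟨?_, ?_, ?_, ?_⟩
  · -- forward transfer
    intro σ α t1' hstep
    obtain ⟨α', us, u', hde, hsilu, host, hRs, hR'⟩ := (hR _ _ hru).1 _ _ _ hstep
    obtain ⟨t2s, hsil2, hq⟩ := silent_transfer_left hQ hqu hsilu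
    rcases host with hstep' | ⟨hα', heq⟩
    · obtain ⟨α'', t2m, t2', hde2, hsil3, host2, hq1, hq2⟩ := (hQ _ _ hq).1 _ _ _ hstep'
      exact ⟨α'', t2m, t2', dataEquiv_trans hde hde2, silent_trans hsil2 hsil3, host2,
        ⟨us, hRs, hq1⟩, ⟨u', hR', hq2⟩⟩
    · subst hα'; subst heq
      have hα : α = ATau.tau := eq_tau_of_dataEquiv_tau_right hde
      subst hα
      exact ⟨ATau.tau, t2s, t2s, trivial, hsil2, Or.inr ⟨rfl, rfl⟩,
        ⟨us, hRs, hq⟩, ⟨us, hR', hq⟩⟩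
  · -- backward transfer
    intro σ α t2' hstep
    obtain ⟨α', us, u', hde, hsilu, host, hQs, hQ'⟩ := (hQ _ _ hqu).2.1 _ _ _ hstep
    obtain ⟨t1s, hsil1, hr⟩ := silent_transfer_right hR hru hsilu
    rcases host with hstep' | ⟨hα', heq⟩
    · obtain ⟨α'', t1m, t1', hde2, hsil3, host2, hr1, hr2⟩ := (hR _ _ hr).2.1 _ _ _ hstep'
      exact ⟨α'', t1m, t1', dataEquiv_trans hde hde2, silent_trans hsil1 hsil3, host2,
        ⟨us, hr1, hQs⟩, ⟨u', hr2, hQ'⟩⟩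
    · subst hα'; subst heq
      have hα : α = ATau.tau := eq_tau_of_dataEquiv_tau_right hde
      subst hα
      exact ⟨ATau.tau, t1s, t1s, trivial, hsil1, Or.inr ⟨rfl, rfl⟩,
        ⟨us, hr, hQs⟩, ⟨us, hr, hQ'⟩⟩
  · -- termination forward
    intro σ ht
    obtain ⟨us, hsilu, htu, hRs⟩ := (hR _ _ hru).2.2.1 _ ht
    obtain ⟨t2s, hsil2, hq⟩ := silent_transfer_left hQ hqu hsilu
    obtain ⟨t2s', hsil3, ht2, hq'⟩ := (hQ _ _ hq).2.2.1 _ htu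
    exact ⟨t2s', silent_trans hsil2 hsil3, ht2, ⟨us, hRs, hq'⟩⟩
  · -- termination backward
    intro σ ht
    obtain ⟨us, hsilu, htu, hQs⟩ := (hQ _ _ hqu).2.2.2 _ ht
    obtain ⟨t1s, hsil1, hr⟩ := silent_transfer_right hR hru hsilu
    obtain ⟨t1s', hsil3, ht1, hr'⟩ := (hR _ _ hr).2.2.2 _ htu
    exact ⟨t1s', silent_trans hsil1 hsil3, ht1, ⟨us, hr', hQs⟩⟩

end IPA
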